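/- Let K = ℝ or ℂ, n ≥ 2, let Q = Q(x, a) be K-analytic near 0 in Kⁿ×K^{n+1} with □(0,0) ≠ 0, and let A = (A¹,…,A^{n+1}) be the K-analytic implicit functions of (x,y,λ) satisfying y ≡ Q(x, A(x,y,λ)) and λ_k ≡ Q_{x^k}(x, A(x,y,λ)) for k = 1,…,n. Let T = T(x,a) be any K-analytic function near 0 and set G(x,y,λ) := T(x, A(x,y,λ)). Then for all ℓ₁, ℓ₂ ∈ {1,…,n}, identically near the base point: ∂²G/∂λ_{ℓ₁}∂λ_{ℓ₂} = (1/□³) Σ_{μ=1}^{n+1} Σ_{ν=1}^{n+1} □^μ_{[0_{1+ℓ₁}]} · □^ν_{[0_{1+ℓ₂}]} · { □ · ∂²T/∂a^μ∂a^ν − Σ_{τ=1}^{n+1} □^τ_{[a^μ a^ν]} · ∂T/∂a^τ }, where all quantities □, □^μ_{[0_{1+ℓ}]}, □^τ_{[a^μ a^ν]} and the partial derivatives of T on the right-hand side are evaluated at (x, A(x,y,λ)). -/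

import Mathlib

open Topology Filter Set

noncomputable section

/-- The space Kⁿ × K^{n+1} of variables (x, a) = (x¹,…,xⁿ, a¹,…,a^{n+1}). -/
abbrev QPt (K : Type*) (n : ℕ) := (Fin n → K) × (Fin (n + 1) → K)

/-- The first-order jet space Kⁿ × K × Kⁿ of variables (x, y, λ), λ_k = y_{x^k}. -/
abbrev JPt (K : Type*) (n : ℕ) := (Fin n → K) × K × (Fin n → K)

variable {K : Type*} [RCLike K] {n : ℕ}

/-- Partial derivative ∂/∂x^k on (x,a)-space. -/
def pdX (k : Fin n) (Q : QPt K n → K) : QPt K n → K :=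
  fun p => fderiv K Q p (Pi.single k 1, 0)

/-- Partial derivative ∂/∂a^μ on (x,a)-space. -/
def pdA (μ : Fin (n + 1)) (Q : QPt K n → K) : QPt K n → K :=
  fun p => fderiv K Q p (0, Pi.single μ 1)

/-- Partial derivative ∂/∂λ_ℓ on the jet space (x,y,λ). -/
def pdL (ℓ : Fin n) (G : JPt K n → K) : JPt K n → K :=
  fun p => fderiv K G p (0, 0, Pi.single ℓ 1)

/-- The (n+1)×(n+1) matrix whose first row is (Q_{a^μ})_μ and whose (1+k)-th row is
(Q_{x^k a^μ})_μ; its determinant is □. -/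
def SqMat (Q : QPt K n → K) (p : QPt K n) : Matrix (Fin (n + 1)) (Fin (n + 1)) K :=
  Matrix.of fun i μ =>
    Fin.cons (α := fun _ => K) (pdA μ Q p) (fun k : Fin n => pdA μ (pdX k Q) p) i

/-- The Jacobian-like determinant □. -/
def Sq (Q : QPt K n → K) (p : QPt K n) : K := (SqMat Q p).det

/-- □^μ_{[0_{1+ℓ}]} : □ with its μ-th column replaced by the standard basis column
with 1 in the (1+ℓ)-th entry. -/
def SqCol (Q : QPt K n → K) (ℓ : Fin n) (μ : Fin (n + 1)) (p : QPt K n) : K :=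
  ((SqMat Q p).updateCol μ (Pi.single ℓ.succ 1)).det

/-- □^ν_{[a^μ a^τ]} : □ with its ν-th column replaced by
(Q_{a^μ a^τ}, Q_{x¹ a^μ a^τ}, …, Q_{xⁿ a^μ a^τ})ᵀ. -/
def SqAA (Q : QPt K n → K) (μ τ : Fin (n + 1)) (ν : Fin (n + 1)) (p : QPt K n) : K :=
  ((SqMat Q p).updateCol ν
    (Fin.cons (α := fun _ => K) (pdA τ (pdA μ Q) p)
      (fun k : Fin n => pdA τ (pdA μ (pdX k Q)) p))).det

/-- The base point (0, Q(0,0), Q_{x¹}(0,0), …, Q_{xⁿ}(0,0)) in the jet space. -/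
def basePt (Q : QPt K n → K) : JPt K n :=
  ((0 : Fin n → K), Q 0, fun k => pdX k Q 0)

/-! Differentiating the identities `y = Q(x, A)`, `λ_k = Q_{x^k}(x, A)` along `λ_ℓ` shows that the
matrix of `□` maps `∂A/∂λ_ℓ` to the `(1+ℓ)`-th basis vector; differentiating once more, it maps
`∂²A/∂λ_{ℓ₁}∂λ_{ℓ₂}` to minus the second `a`-derivatives of `(Q, Q_{x¹}, …, Q_{xⁿ})` contracted
with `∂A/∂λ_{ℓ₁}` and `∂A/∂λ_{ℓ₂}`. Cramer's rule expresses both through `□^μ_{[0_{1+ℓ}]}` and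
`□^τ_{[a^μ a^ν]}`, and the chain rule for `G = T(x, A)` combines them into the formula, once the
symmetry of the second derivatives of `T` and `Q` has matched up the indices. -/

open Matrix

theorem Matrix.det_mul_eq_det_updateCol_of_mulVec_eq {ι R : Type*} [Fintype ι] [DecidableEq ι]
    [CommRing R] {M : Matrix ι ι R} {x b : ι → R} (h : M *ᵥ x = b) (i : ι) :
    M.det * x i = (M.updateCol i b).det := by
  rw [← cramer_apply, ← h, cramer_eq_adjugate_mulVec, mulVec_mulVec, adjugate_mul, smul_mulVec,
    one_mulVec, Pi.smul_apply, smul_eq_mul]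

theorem sum_second_order_chain_eq_cramer {R ι : Type*} [Field R] [Fintype ι] {s : R} (hs : s ≠ 0)
    (a b c t : ι → R) (H : ι → ι → R) (S : ι → ι → ι → R)
    (hc : ∀ τ, s * c τ = -∑ μ, ∑ ν, b μ * a ν * S μ ν τ)
    (hH : ∀ μ ν, H μ ν = H ν μ) (hS : ∀ μ ν τ, S μ ν τ = S ν μ τ) :
    ∑ μ, (t μ * c μ + b μ * ∑ ν, H μ ν * a ν) =
      1 / s ^ 3 * ∑ μ, ∑ ν, s * a μ * (s * b ν) * (s * H μ ν - ∑ τ, S μ ν τ * t τ) := by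
  have hc' : ∀ τ, c τ = -s⁻¹ * ∑ μ, ∑ ν, a μ * b ν * S μ ν τ := fun τ => by
    have hsym : ∑ μ, ∑ ν, a μ * b ν * S μ ν τ = ∑ μ, ∑ ν, b μ * a ν * S μ ν τ := by
      rw [Finset.sum_comm]
      exact Finset.sum_congr rfl fun ν _ => Finset.sum_congr rfl fun μ _ => by rw [hS]; ring
    rw [hsym, neg_mul, ← mul_neg, ← hc, inv_mul_cancel_left₀ hs]
  have hH' : ∀ μ, b μ * ∑ ν, H μ ν * a ν = ∑ ν, a ν * b μ * H ν μ := fun μ => by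
    rw [Finset.mul_sum]
    exact Finset.sum_congr rfl fun ν _ => by rw [hH]; ring
  rw [Finset.sum_add_distrib, Finset.sum_congr rfl fun μ _ => hH' μ,
    Finset.sum_comm (f := fun μ ν => a ν * b μ * H ν μ)]
  simp only [hc', Finset.mul_sum, mul_sub, Finset.sum_sub_distrib]
  rw [← Finset.sum_comm_cycle, add_comm, sub_eq_add_neg]
  congr 1
  · refine Finset.sum_congr rfl fun μ _ => Finset.sum_congr rfl fun ν _ => ?_
    field_simp
  · simp only [← Finset.sum_neg_distrib]
    refine Finset.sum_congr rfl fun μ _ => Finset.sum_congr rfl fun ν _ =>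
      Finset.sum_congr rfl fun τ _ => ?_
    field_simp

section PartialDerivatives

variable {f : QPt K n → K} {q : QPt K n}

theorem AnalyticAt.pdA (hf : AnalyticAt K f q) (μ : Fin (n + 1)) : AnalyticAt K (pdA μ f) q :=
  ((ContinuousLinearMap.apply K K ((0, Pi.single μ 1) : QPt K n)).analyticAt _).comp hf.fderiv

theorem AnalyticAt.pdX (hf : AnalyticAt K f q) (k : Fin n) : AnalyticAt K (pdX k f) q :=
  ((ContinuousLinearMap.apply K K ((Pi.single k 1, 0) : QPt K n)).analyticAt _).comp hf.fderiv

theorem pdA_pdA_comm (hf : AnalyticAt K f q) (μ ν : Fin (n + 1)) :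
    pdA ν (pdA μ f) q = pdA μ (pdA ν f) q := by
  have hsnd : ∀ μ ν : Fin (n + 1), pdA ν (pdA μ f) q =
      fderiv K (fderiv K f) q (0, Pi.single ν 1) (0, Pi.single μ 1) := fun μ ν => by
    change fderiv K (fun p => fderiv K f p (0, Pi.single μ 1)) q (0, Pi.single ν 1) = _
    rw [fderiv_clm_apply hf.fderiv.differentiableAt (differentiableAt_const _)]
    simp
  rw [hsnd, hsnd]
  exact (hf.contDiffAt (n := ⊤)).isSymmSndFDerivAt le_top _ _

theorem fderiv_apply_zero_fst (w : Fin (n + 1) → K) :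
    fderiv K f q (0, w) = ∑ μ, pdA μ f q * w μ := by
  have hw : ((0, w) : QPt K n) = ∑ μ, w μ • ((0, Pi.single μ 1) : QPt K n) := by
    ext j
    · simp [Prod.fst_sum]
    · simp [Prod.snd_sum, Finset.sum_apply, Pi.single_apply]
  rw [hw, map_sum]
  refine Finset.sum_congr rfl fun μ _ => ?_
  rw [map_smul, smul_eq_mul, mul_comm, pdA]

end PartialDerivatives

section Jets

variable {Q : QPt K n → K} {q : QPt K n}

/-- `(Q, Q_{x¹}, …, Q_{xⁿ})`: `SqMat Q` is its Jacobian in `a`, and the identities defining `A` say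
that it takes `(x, A(x, y, λ))` to the coordinates `(y, λ)`, i.e. to `jetCoord`. -/
def jetMap (Q : QPt K n → K) : Fin (n + 1) → QPt K n → K :=
  Fin.cons (α := fun _ => QPt K n → K) Q fun k => pdX k Q

def jetCoord : Fin (n + 1) → JPt K n →L[K] K :=
  Fin.cons (α := fun _ => JPt K n →L[K] K)
    (ContinuousLinearMap.fst K K _ ∘L ContinuousLinearMap.snd K _ _)
    fun k => ContinuousLinearMap.proj k ∘L ContinuousLinearMap.snd K K _ ∘L
      ContinuousLinearMap.snd K _ _

theorem AnalyticAt.jetMap (hQ : AnalyticAt K Q q) (i : Fin (n + 1)) :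
    AnalyticAt K (jetMap Q i) q :=
  Fin.cases hQ (fun k => hQ.pdX k) i

theorem forall_jetCoord_eq_jetMap_iff (p : JPt K n) :
    (∀ i, jetCoord i p = jetMap Q i q) ↔ p.2.1 = Q q ∧ ∀ k, p.2.2 k = pdX k Q q :=
  Fin.forall_fin_succ

theorem jetCoord_single (ℓ : Fin n) :
    (fun i => jetCoord i ((0, 0, Pi.single ℓ 1) : JPt K n)) = Pi.single ℓ.succ 1 := by
  funext i
  cases i using Fin.cases <;> simp [jetCoord, Pi.single_apply]

theorem sqMat_apply (i μ : Fin (n + 1)) : SqMat Q q i μ = pdA μ (jetMap Q i) q := by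
  cases i using Fin.cases <;> rfl

theorem sqAA_eq_det_updateCol (μ ν τ : Fin (n + 1)) :
    SqAA Q μ ν τ q = ((SqMat Q q).updateCol τ fun i => pdA ν (pdA μ (jetMap Q i)) q).det := by
  unfold SqAA
  congr 2
  funext i
  cases i using Fin.cases <;> rfl

theorem sqAA_comm (hQ : AnalyticAt K Q q) (μ ν τ : Fin (n + 1)) :
    SqAA Q μ ν τ q = SqAA Q ν μ τ q := by
  simp only [sqAA_eq_det_updateCol, pdA_pdA_comm (hQ.jetMap _)]

theorem continuousAt_sq (hQ : AnalyticAt K Q q) : ContinuousAt (Sq Q) q := by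
  have hM : ContinuousAt (SqMat Q) q := continuousAt_pi.2 fun i => continuousAt_pi.2 fun μ =>
    ((hQ.jetMap i).pdA μ).continuousAt.congr (.of_forall fun _ => (sqMat_apply i μ).symm)
  exact (continuous_id.matrix_det).continuousAt.comp hM

end Jets

section Graph

variable {A : JPt K n → Fin (n + 1) → K} {p : JPt K n} {Q T f : QPt K n → K}

theorem AnalyticAt.fderiv_apply_apply (hA : AnalyticAt K A p) (v : JPt K n) (μ : Fin (n + 1)) :
    AnalyticAt K (fun q => fderiv K A q v μ) p :=
  ((ContinuousLinearMap.proj (R := K) (φ := fun _ : Fin (n + 1) => K) μ).analyticAt _).comp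
    (((ContinuousLinearMap.apply K (Fin (n + 1) → K) v).analyticAt _).comp hA.fderiv)

theorem eventually_comp_graph (hA : ContinuousAt A p) {P : QPt K n → Prop}
    (hP : ∀ᶠ a in 𝓝 (p.1, A p), P a) : ∀ᶠ q in 𝓝 p, P (q.1, A q) :=
  (continuousAt_fst.prodMk hA).eventually hP

theorem fderiv_comp_graph_apply (hA : DifferentiableAt K A p)
    (hf : DifferentiableAt K f (p.1, A p)) {v : JPt K n} (hv : v.1 = 0) :
    fderiv K (fun q => f (q.1, A q)) p v = ∑ μ, pdA μ f (p.1, A p) * fderiv K A p v μ := by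
  have hgraph : HasFDerivAt (fun q : JPt K n => ((q.1, A q) : QPt K n))
      ((ContinuousLinearMap.fst K _ _).prod (fderiv K A p)) p :=
    hasFDerivAt_fst.prodMk hA.hasFDerivAt
  rw [HasFDerivAt.fderiv (f := fun q => f (q.1, A q)) (hf.hasFDerivAt.comp p hgraph),
    ContinuousLinearMap.comp_apply,
    ContinuousLinearMap.prod_apply, ContinuousLinearMap.coe_fst', hv]
  exact fderiv_apply_zero_fst _

theorem fderiv_sum_comp_graph_mul_apply (hA : AnalyticAt K A p)
    {f : Fin (n + 1) → QPt K n → K} (hf : ∀ μ, AnalyticAt K (f μ) (p.1, A p)) (v : JPt K n)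
    {w : JPt K n} (hw : w.1 = 0) :
    fderiv K (fun q => ∑ μ, f μ (q.1, A q) * fderiv K A q v μ) p w =
      ∑ μ, (f μ (p.1, A p) * fderiv K (fun q => fderiv K A q v μ) p w +
        fderiv K A p v μ * ∑ ν, pdA ν (f μ) (p.1, A p) * fderiv K A p w ν) := by
  have hfA : ∀ μ, DifferentiableAt K (fun q => f μ (q.1, A q)) p := fun μ =>
    (hf μ).differentiableAt.comp p (differentiableAt_fst.prodMk hA.differentiableAt)
  have hDA : ∀ μ, DifferentiableAt K (fun q => fderiv K A q v μ) p := fun μ =>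
    (hA.fderiv_apply_apply v μ).differentiableAt
  rw [fderiv_fun_sum (A := fun μ q => f μ (q.1, A q) * fderiv K A q v μ)
    fun μ _ => (hfA μ).mul (hDA μ), _root_.sum_apply]
  refine Finset.sum_congr rfl fun μ _ => ?_
  rw [fderiv_fun_mul (hfA μ) (hDA μ), _root_.add_apply,
    _root_.smul_apply, _root_.smul_apply, smul_eq_mul, smul_eq_mul,
    fderiv_comp_graph_apply hA.differentiableAt (hf μ).differentiableAt hw]

theorem sqMat_mulVec_fderiv (hA : DifferentiableAt K A p) (hQ : AnalyticAt K Q (p.1, A p))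
    (hid : ∀ᶠ q in 𝓝 p, ∀ i, jetCoord i q = jetMap Q i (q.1, A q)) {v : JPt K n}
    (hv : v.1 = 0) :
    SqMat Q (p.1, A p) *ᵥ fderiv K A p v = fun i => jetCoord i v := by
  funext i
  have hi : ⇑(jetCoord (K := K) i) =ᶠ[𝓝 p] fun q => jetMap Q i (q.1, A q) :=
    hid.mono fun q hq => hq i
  have hderiv := DFunLike.congr_fun (hi.fderiv_eq (𝕜 := K)) v
  rw [ContinuousLinearMap.fderiv,
    fderiv_comp_graph_apply hA (hQ.jetMap i).differentiableAt hv] at hderiv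
  simp only [mulVec, dotProduct, sqMat_apply, hderiv]

theorem sqMat_mulVec_fderiv_fderiv (hA : AnalyticAt K A p) (hQ : AnalyticAt K Q (p.1, A p))
    (hid : ∀ᶠ q in 𝓝 p, ∀ i, jetCoord i q = jetMap Q i (q.1, A q)) {v w : JPt K n}
    (hv : v.1 = 0) (hw : w.1 = 0) :
    SqMat Q (p.1, A p) *ᵥ (fun σ => fderiv K (fun q => fderiv K A q v σ) p w) =
      -∑ μ, ∑ ν, (fderiv K A p v μ * fderiv K A p w ν) •
        fun i => pdA ν (pdA μ (jetMap Q i)) (p.1, A p) := by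
  -- the first-order identity holds at every point near `p`, so its left side is locally constant
  have hconst : ∀ i, (fun q => ∑ μ, pdA μ (jetMap Q i) (q.1, A q) * fderiv K A q v μ)
      =ᶠ[𝓝 p] fun _ => jetCoord (K := K) i v := fun i => by
    filter_upwards [hA.eventually_analyticAt,
      eventually_comp_graph hA.continuousAt hQ.eventually_analyticAt,
      eventually_eventually_nhds.2 hid]
      with q hAq hQq hidq
    simpa only [mulVec, dotProduct, sqMat_apply] using
      congrFun (sqMat_mulVec_fderiv hAq.differentiableAt hQq hidq hv) i
  funext i
  have h0 := DFunLike.congr_fun ((hconst i).fderiv_eq (𝕜 := K)) w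
  rw [fderiv_fun_const, fderiv_sum_comp_graph_mul_apply hA (fun μ => (hQ.jetMap i).pdA μ) v hw,
    Finset.sum_add_distrib] at h0
  simp only [mulVec, dotProduct, sqMat_apply, Pi.neg_apply, Finset.sum_apply, Pi.smul_apply,
    smul_eq_mul, Finset.mul_sum, Pi.zero_apply, _root_.zero_apply] at h0 ⊢
  rw [eq_neg_iff_add_eq_zero, ← h0]
  congr 1
  exact Finset.sum_congr rfl fun μ _ => Finset.sum_congr rfl fun ν _ => by ring

theorem sq_mul_fderiv_eq_sqCol (hA : DifferentiableAt K A p) (hQ : AnalyticAt K Q (p.1, A p))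
    (hid : ∀ᶠ q in 𝓝 p, ∀ i, jetCoord i q = jetMap Q i (q.1, A q)) (ℓ : Fin n)
    (μ : Fin (n + 1)) :
    Sq Q (p.1, A p) * fderiv K A p (0, 0, Pi.single ℓ 1) μ = SqCol Q ℓ μ (p.1, A p) := by
  refine det_mul_eq_det_updateCol_of_mulVec_eq ?_ μ
  rw [sqMat_mulVec_fderiv hA hQ hid rfl, jetCoord_single]

theorem sq_mul_fderiv_fderiv_eq (hA : AnalyticAt K A p) (hQ : AnalyticAt K Q (p.1, A p))
    (hid : ∀ᶠ q in 𝓝 p, ∀ i, jetCoord i q = jetMap Q i (q.1, A q)) {v w : JPt K n}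
    (hv : v.1 = 0) (hw : w.1 = 0) (σ : Fin (n + 1)) :
    Sq Q (p.1, A p) * fderiv K (fun q => fderiv K A q v σ) p w =
      -∑ μ, ∑ ν, fderiv K A p v μ * fderiv K A p w ν * SqAA Q μ ν σ (p.1, A p) := by
  rw [Sq, det_mul_eq_det_updateCol_of_mulVec_eq (sqMat_mulVec_fderiv_fderiv hA hQ hid hv hw),
    ← cramer_apply, map_neg, map_sum]
  simp only [map_sum, map_smul, Pi.neg_apply, Finset.sum_apply, Pi.smul_apply, smul_eq_mul,
    cramer_apply, sqAA_eq_det_updateCol]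

theorem pdL_pdL_comp_graph (hA : AnalyticAt K A p) (hT : AnalyticAt K T (p.1, A p))
    (ℓ₁ ℓ₂ : Fin n) :
    pdL ℓ₁ (pdL ℓ₂ fun q => T (q.1, A q)) p =
      ∑ μ, (pdA μ T (p.1, A p) *
          fderiv K (fun q => fderiv K A q (0, 0, Pi.single ℓ₂ 1) μ) p (0, 0, Pi.single ℓ₁ 1) +
        fderiv K A p (0, 0, Pi.single ℓ₂ 1) μ *
          ∑ ν, pdA ν (pdA μ T) (p.1, A p) * fderiv K A p (0, 0, Pi.single ℓ₁ 1) ν) := by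
  have hfirst : pdL ℓ₂ (fun q => T (q.1, A q)) =ᶠ[𝓝 p]
      fun q => ∑ μ, pdA μ T (q.1, A q) * fderiv K A q (0, 0, Pi.single ℓ₂ 1) μ := by
    filter_upwards [hA.eventually_analyticAt,
      eventually_comp_graph hA.continuousAt hT.eventually_analyticAt] with q hAq hTq
    exact fderiv_comp_graph_apply hAq.differentiableAt hTq.differentiableAt rfl
  rw [pdL, hfirst.fderiv_eq (𝕜 := K)]
  exact fderiv_sum_comp_graph_mul_apply hA (fun μ => hT.pdA μ) _ rfl

theorem pdL_pdL_comp_graph_eq (hA : AnalyticAt K A p) (hQ : AnalyticAt K Q (p.1, A p))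
    (hT : AnalyticAt K T (p.1, A p)) (hSq : Sq Q (p.1, A p) ≠ 0)
    (hid : ∀ᶠ q in 𝓝 p, ∀ i, jetCoord i q = jetMap Q i (q.1, A q)) (ℓ₁ ℓ₂ : Fin n) :
    pdL ℓ₁ (pdL ℓ₂ (fun q => T (q.1, A q))) p =
      (1 / (Sq Q (p.1, A p)) ^ 3) *
        ∑ μ : Fin (n + 1), ∑ ν : Fin (n + 1),
          SqCol Q ℓ₁ μ (p.1, A p) * SqCol Q ℓ₂ ν (p.1, A p) *
            (Sq Q (p.1, A p) * pdA ν (pdA μ T) (p.1, A p) -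
              ∑ τ : Fin (n + 1), SqAA Q μ ν τ (p.1, A p) * pdA τ T (p.1, A p)) := by
  simp only [← sq_mul_fderiv_eq_sqCol hA.differentiableAt hQ hid]
  rw [pdL_pdL_comp_graph hA hT]
  exact sum_second_order_chain_eq_cramer hSq _ _ _ _ _ _
    (sq_mul_fderiv_fderiv_eq hA hQ hid rfl rfl) (pdA_pdA_comm hT) (sqAA_comm hQ)

end Graph

theorem second_jet_derivative_transfer_general {K : Type*} [RCLike K] {n : ℕ}
    (Q : QPt K n → K) (hQ : AnalyticAt K Q 0) (hSq : Sq Q 0 ≠ 0)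
    (A : JPt K n → (Fin (n + 1) → K))
    (hA : AnalyticAt K A (basePt Q)) (hA0 : A (basePt Q) = 0)
    (hid : ∀ᶠ p in 𝓝 (basePt Q),
      p.2.1 = Q (p.1, A p) ∧ ∀ k : Fin n, p.2.2 k = pdX k Q (p.1, A p))
    (T : QPt K n → K) (hT : AnalyticAt K T 0) :
    ∀ ℓ₁ ℓ₂ : Fin n, ∀ᶠ p in 𝓝 (basePt Q),
      pdL ℓ₁ (pdL ℓ₂ (fun q => T (q.1, A q))) p =
        (1 / (Sq Q (p.1, A p)) ^ 3) *
          ∑ μ : Fin (n + 1), ∑ ν : Fin (n + 1),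
            SqCol Q ℓ₁ μ (p.1, A p) * SqCol Q ℓ₂ ν (p.1, A p) *
              (Sq Q (p.1, A p) * pdA ν (pdA μ T) (p.1, A p) -
                ∑ τ : Fin (n + 1), SqAA Q μ ν τ (p.1, A p) * pdA τ T (p.1, A p)) := by
  intro ℓ₁ ℓ₂
  have hbase : ((basePt Q).1, A (basePt Q)) = (0 : QPt K n) := by rw [hA0]; rfl
  have near : ∀ {P : QPt K n → Prop}, (∀ᶠ a in 𝓝 0, P a) → ∀ᶠ p in 𝓝 (basePt Q), P (p.1, A p) :=
    fun hP => eventually_comp_graph hA.continuousAt (hbase ▸ hP)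
  have hjet : ∀ᶠ p in 𝓝 (basePt Q), ∀ i, jetCoord i p = jetMap Q i (p.1, A p) :=
    hid.mono fun p hp => (forall_jetCoord_eq_jetMap_iff p).2 hp
  filter_upwards [hA.eventually_analyticAt, near hQ.eventually_analyticAt,
    near hT.eventually_analyticAt, near ((continuousAt_sq hQ).eventually_ne hSq),
    eventually_eventually_nhds.2 hjet] with p hAp hQp hTp hSqp hjetp
  exact pdL_pdL_comp_graph_eq hAp hQp hTp hSqp hjetp ℓ₁ ℓ₂

/-- transfer of second-order jet derivatives.  For G(x,y,λ) := T(x, A(x,y,λ)),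
∂²G/∂λ_{ℓ₁}∂λ_{ℓ₂} = (1/□³)·Σ_{μ,ν} □^μ_{[0_{1+ℓ₁}]}·□^ν_{[0_{1+ℓ₂}]}·
{□·∂²T/∂a^μ∂a^ν − Σ_τ □^τ_{[a^μ a^ν]}·∂T/∂a^τ}, all quantities on the right being
evaluated at (x, A(x,y,λ)). -/
theorem second_jet_derivative_transfer {K : Type*} [RCLike K] {n : ℕ} (hn : 2 ≤ n)
    (Q : QPt K n → K) (hQ : AnalyticAt K Q 0) (hSq : Sq Q 0 ≠ 0)
    (A : JPt K n → (Fin (n + 1) → K))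
    (hA : AnalyticAt K A (basePt Q)) (hA0 : A (basePt Q) = 0)
    (hid : ∀ᶠ p in 𝓝 (basePt Q),
      p.2.1 = Q (p.1, A p) ∧ ∀ k : Fin n, p.2.2 k = pdX k Q (p.1, A p))
    (T : QPt K n → K) (hT : AnalyticAt K T 0) :
    ∀ ℓ₁ ℓ₂ : Fin n, ∀ᶠ p in 𝓝 (basePt Q),
      pdL ℓ₁ (pdL ℓ₂ (fun q => T (q.1, A q))) p =
        (1 / (Sq Q (p.1, A p)) ^ 3) *
          ∑ μ : Fin (n + 1), ∑ ν : Fin (n + 1),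
            SqCol Q ℓ₁ μ (p.1, A p) * SqCol Q ℓ₂ ν (p.1, A p) *
              (Sq Q (p.1, A p) * pdA ν (pdA μ T) (p.1, A p) -
                ∑ τ : Fin (n + 1), SqAA Q μ ν τ (p.1, A p) * pdA τ T (p.1, A p)) :=
  second_jet_derivative_transfer_general Q hQ hSq A hA hA0 hid T hT
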